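/- arXiv:1910.09992 — 3 statements merged into one kernel-verified Lean document; each statement's English description precedes it below -/
import Mathlib

section
/- For an odd prime p with gcd(p, 2Δ) = 1, where Δ is a squarefree product of an even number of primes, there exists a prime q with q ≡ 1 (mod 4), q a quadratic residue mod p, and such that the Hilbert symbol (q, -Δ)_ℓ = -1 if and only if ℓ divides Δ. (Existence of the auxiliary prime in the Hashimoto model construction.) -/
/-!
Pick `q` by Dirichlet's theorem in a residue class modulo `8 · p · ∏ ℓ` (over the odd primes
`ℓ ∣ Δ`): `q ≡ 1 (mod p)`, `q ≡ 5 or 1 (mod 8)` according as `2 ∣ Δ` or not, and `q` a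
nonresidue modulo every odd `ℓ ∣ Δ`. The Hilbert symbols are then computed locally. At an odd
`ℓ ∤ qΔ` both entries are units and the conic has a point mod `ℓ` that Hensel lifts; at `2 ∤ Δ`
and at `q` one entry is a square. At `ℓ ∣ Δ` a primitive solution reduces modulo `ℓ`
(modulo `8` when `ℓ = 2`) to a contradiction, since `ℓ² ∤ Δ`. The square at `q` is `-Δ`: as
`q ≡ 1 (mod 4)`, `(-Δ / q) = ∏_{ℓ ∣ Δ} (ℓ / q)`, and every factor is `-1` (by reciprocity for
odd `ℓ`, by the second supplement for `ℓ = 2`), so the product is `(-1)^{ω(Δ)} = 1`.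
-/

/-- The Hilbert symbol `(a,b)_ℓ ∈ {±1}` over `ℚ_ℓ`: it is `1` exactly when the quadratic
form `z² = a x² + b y²` has a nontrivial solution over `ℚ_ℓ`. -/
noncomputable def hilbertSymbol (ℓ : ℕ) [Fact ℓ.Prime] (a b : ℚ) : ℤ :=
  letI := Classical.propDecidable
  if ∃ x y z : ℚ_[ℓ], (x, y, z) ≠ (0, 0, 0) ∧
      z ^ 2 = (a : ℚ_[ℓ]) * x ^ 2 + (b : ℚ_[ℓ]) * y ^ 2 then 1 else -1

open Polynomial

theorem eq_zero_and_eq_zero_of_sq_eq_mul_sq {K : Type*} [Field K] {a x z : K}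
    (ha : ¬IsSquare a) (h : z ^ 2 = a * x ^ 2) : x = 0 ∧ z = 0 := by
  have hx : x = 0 := by
    by_contra hx
    exact ha ⟨z / x, by field_simp; linear_combination -h⟩
  exact ⟨hx, by simpa [hx] using h⟩

namespace PadicInt

variable {ℓ : ℕ} [Fact ℓ.Prime]

theorem toZMod_eq_zero_iff_norm_lt_one {x : ℤ_[ℓ]} : toZMod x = 0 ↔ ‖x‖ < 1 := by
  rw [← RingHom.mem_ker, ker_toZMod, IsLocalRing.mem_maximalIdeal, mem_nonunits]

theorem norm_eq_one_iff_toZMod_ne_zero {x : ℤ_[ℓ]} : ‖x‖ = 1 ↔ toZMod x ≠ 0 := by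
  rw [ne_eq, toZMod_eq_zero_iff_norm_lt_one, not_lt]
  exact ⟨ge_of_eq, (norm_le_one x).antisymm⟩

theorem isSquare_of_norm_sq_sub_lt {u a : ℤ_[ℓ]} (h : ‖a ^ 2 - u‖ < ‖2 * a‖ ^ 2) :
    IsSquare u := by
  have hF : (X ^ 2 - C u).aeval a = a ^ 2 - u := by simp
  have hF' : (derivative (X ^ 2 - C u)).aeval a = 2 * a := by simp [one_add_one_eq_two]
  obtain ⟨z, hz, -⟩ := hensels_lemma (F := X ^ 2 - C u) (a := a) (by rwa [hF, hF'])
  exact ⟨z, by simpa [sub_eq_zero, sq, eq_comm] using hz⟩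

theorem isSquare_of_isSquare_toZMod (hℓ : ℓ ≠ 2) {u : ℤ_[ℓ]} (hu : IsSquare (toZMod u))
    (hu0 : toZMod u ≠ 0) : IsSquare u := by
  obtain ⟨c, hc⟩ := hu
  set a : ℤ_[ℓ] := (c.val : ℤ_[ℓ])
  have ha : toZMod a = c := by simp [a]
  refine isSquare_of_norm_sq_sub_lt (a := a) ?_
  have h2 : (2 : ZMod ℓ) ≠ 0 := Ring.two_ne_zero (by rwa [ZMod.ringChar_zmod_n])
  rw [(norm_eq_one_iff_toZMod_ne_zero (x := 2 * a)).mpr, one_pow,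
    ← toZMod_eq_zero_iff_norm_lt_one]
  · simp [ha, hc, sq]
  · simp only [map_mul, map_ofNat, ha]
    exact mul_ne_zero h2 (by rintro rfl; simp_all)

theorem isSquare_intCast_two {a : ℤ} (ha : a % 8 = 1) : IsSquare (a : ℤ_[2]) := by
  refine isSquare_of_norm_sq_sub_lt (a := 1) ?_
  have h8 : ‖((1 - a : ℤ) : ℤ_[2])‖ ≤ (2 : ℝ) ^ (-(3 : ℕ) : ℤ) :=
    norm_int_le_pow_iff_dvd.mpr (by omega)
  have h2 : ‖(2 : ℤ_[2])‖ = 2⁻¹ := by exact_mod_cast norm_p (p := 2)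
  push_cast at h8
  rw [mul_one, h2, one_pow]
  calc ‖1 - (a : ℤ_[2])‖ ≤ (2 : ℝ) ^ (-3 : ℤ) := h8
    _ < 2⁻¹ ^ 2 := by norm_num

theorem sq_ne_add_of_not_isSquare {a b : ℤ} (ha : ¬IsSquare (a : ZMod ℓ)) (hb : (ℓ : ℤ) ∣ b)
    (hb2 : ¬(ℓ : ℤ) ^ 2 ∣ b) {x y z : ℤ_[ℓ]} (h1 : x = 1 ∨ y = 1 ∨ z = 1) :
    z ^ 2 ≠ a * x ^ 2 + b * y ^ 2 := by
  intro h
  have hred : toZMod z ^ 2 = (a : ZMod ℓ) * toZMod x ^ 2 := by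
    simpa [(ZMod.intCast_zmod_eq_zero_iff_dvd b ℓ).mpr hb] using congrArg toZMod h
  obtain ⟨hx, hz⟩ := eq_zero_and_eq_zero_of_sq_eq_mul_sq ha hred
  obtain ⟨x₁, rfl⟩ := (norm_lt_one_iff_dvd _).mp (toZMod_eq_zero_iff_norm_lt_one.mp hx)
  obtain ⟨z₁, rfl⟩ := (norm_lt_one_iff_dvd _).mp (toZMod_eq_zero_iff_norm_lt_one.mp hz)
  -- `ℓ` divides `x` and `z`, so the coordinate equal to `1` is `y`, and then `ℓ² ∣ b`.
  have hnu (t : ℤ_[ℓ]) : (ℓ : ℤ_[ℓ]) * t ≠ 1 := fun ht => by simpa using congrArg toZMod ht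
  obtain rfl : y = 1 := by
    rcases h1 with h1 | h1 | h1
    exacts [(hnu _ h1).elim, h1, (hnu _ h1).elim]
  exact hb2 ((pow_p_dvd_int_iff 2 b).mp ⟨z₁ ^ 2 - a * x₁ ^ 2, by linear_combination -h⟩)

theorem sq_ne_add_of_emod_eight_eq_five {a b : ℤ} (ha : a % 8 = 5) (hb : b % 4 = 2) {x y z : ℤ_[2]}
    (h1 : x = 1 ∨ y = 1 ∨ z = 1) : z ^ 2 ≠ a * x ^ 2 + b * y ^ 2 := by
  intro h
  have hmod8 {n : ℤ} {r : ℕ} (hn : n % 8 = r) : (n : ZMod (2 ^ 3)) = r := by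
    rw [← ZMod.intCast_mod n, show ((2 ^ 3 : ℕ) : ℤ) = 8 by norm_num, hn]; rfl
  have key : ∀ x y z : ZMod (2 ^ 3), x = 1 ∨ y = 1 ∨ z = 1 →
      z ^ 2 ≠ 5 * x ^ 2 + 2 * y ^ 2 ∧ z ^ 2 ≠ 5 * x ^ 2 + 6 * y ^ 2 := by
    decide
  have h8 := congrArg (toZModPow 3) h
  simp only [map_add, map_mul, map_pow, map_intCast, hmod8 (r := 5) ha] at h8
  have h1' : toZModPow 3 x = 1 ∨ toZModPow 3 y = 1 ∨ toZModPow 3 z = 1 := by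
    rcases h1 with rfl | rfl | rfl <;> simp
  obtain ⟨h2, h6⟩ := key _ _ _ h1'
  rcases (by omega : b % 8 = 2 ∨ b % 8 = 6) with hb8 | hb8
  · exact h2 (by simpa [hmod8 hb8] using h8)
  · exact h6 (by simpa [hmod8 hb8] using h8)

end PadicInt

section Local

variable {ℓ : ℕ} [Fact ℓ.Prime]

theorem Padic.exists_padicInt_sq_eq_add_of_ne_zero {a b : ℤ_[ℓ]} {x y z : ℚ_[ℓ]}
    (hne : (x, y, z) ≠ (0, 0, 0)) (h : z ^ 2 = a * x ^ 2 + b * y ^ 2) :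
    ∃ x' y' z' : ℤ_[ℓ], (x' = 1 ∨ y' = 1 ∨ z' = 1) ∧ z' ^ 2 = a * x' ^ 2 + b * y' ^ 2 := by
  classical
  -- Divide by the coordinate of largest norm.
  obtain ⟨c, hc, hmax⟩ := Finset.exists_max_image {x, y, z} (‖·‖) (by simp)
  simp only [Finset.mem_insert, Finset.mem_singleton, forall_eq_or_imp, forall_eq] at hc hmax
  obtain ⟨hx, hy, hz⟩ := hmax
  have hc0 : c ≠ 0 := by
    rintro rfl
    simp_all
  let scale (t : ℚ_[ℓ]) (ht : ‖t‖ ≤ ‖c‖) : ℤ_[ℓ] :=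
    ⟨t / c, by rw [norm_div]; exact div_le_one_of_le₀ ht (norm_nonneg _)⟩
  have hscale (t : ℚ_[ℓ]) (ht) : (scale t ht : ℚ_[ℓ]) = t / c := rfl
  refine ⟨scale x hx, scale y hy, scale z hz, ?_, PadicInt.ext ?_⟩
  · have hone (ht) : scale c ht = 1 := PadicInt.ext (by simp [hscale, hc0])
    rcases hc with rfl | rfl | rfl <;> simp [hone]
  · simp only [PadicInt.coe_add, PadicInt.coe_mul, PadicInt.coe_pow, hscale]
    field_simp
    linear_combination h

theorem Padic.isSquare_intCast_of_isSquare_zmod (hℓ : ℓ ≠ 2) {a : ℤ}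
    (ha : IsSquare (a : ZMod ℓ)) (ha0 : (a : ZMod ℓ) ≠ 0) : IsSquare (a : ℚ_[ℓ]) := by
  have hsq := PadicInt.isSquare_of_isSquare_toZMod (u := (a : ℤ_[ℓ])) hℓ (by simpa using ha)
    (by simpa using ha0)
  simpa using hsq.map PadicInt.Coe.ringHom

theorem Padic.isSquare_intCast_two {a : ℤ} (ha : a % 8 = 1) : IsSquare (a : ℚ_[2]) := by
  simpa using (PadicInt.isSquare_intCast_two ha).map PadicInt.Coe.ringHom

theorem hilbertSymbol_eq_one_iff {a b : ℚ} : hilbertSymbol ℓ a b = 1 ↔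
    ∃ x y z : ℚ_[ℓ], (x, y, z) ≠ (0, 0, 0) ∧
      z ^ 2 = (a : ℚ_[ℓ]) * x ^ 2 + (b : ℚ_[ℓ]) * y ^ 2 := by
  unfold hilbertSymbol
  split_ifs with h
  · exact iff_of_true rfl h
  · exact iff_of_false (by norm_num) h

theorem hilbertSymbol_eq_neg_one_iff {a b : ℚ} : hilbertSymbol ℓ a b = -1 ↔
    ¬∃ x y z : ℚ_[ℓ], (x, y, z) ≠ (0, 0, 0) ∧
      z ^ 2 = (a : ℚ_[ℓ]) * x ^ 2 + (b : ℚ_[ℓ]) * y ^ 2 := by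
  unfold hilbertSymbol
  split_ifs with h
  · exact iff_of_false (by norm_num) (not_not_intro h)
  · exact iff_of_true rfl h

theorem hilbertSymbol_eq_one_of_isSquare_left {a b : ℚ} (ha : IsSquare (a : ℚ_[ℓ])) :
    hilbertSymbol ℓ a b = 1 := by
  obtain ⟨w, hw⟩ := ha
  exact hilbertSymbol_eq_one_iff.mpr ⟨1, 0, w, by simp, by simp [hw, sq]⟩

theorem hilbertSymbol_eq_one_of_isSquare_right {a b : ℚ} (hb : IsSquare (b : ℚ_[ℓ])) :
    hilbertSymbol ℓ a b = 1 := by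
  obtain ⟨w, hw⟩ := hb
  exact hilbertSymbol_eq_one_iff.mpr ⟨0, 1, w, by simp, by simp [hw, sq]⟩

theorem hilbertSymbol_eq_one_of_not_dvd (hℓ : ℓ ≠ 2) {a b : ℤ} (ha : ¬(ℓ : ℤ) ∣ a)
    (hb : ¬(ℓ : ℤ) ∣ b) : hilbertSymbol ℓ a b = 1 := by
  rw [← ZMod.intCast_zmod_eq_zero_iff_dvd] at ha hb
  -- Pigeonhole solves `a s² + b t² = 1` mod `ℓ`; Hensel makes the lifted value a square.
  obtain ⟨s, t, hst⟩ := FiniteField.exists_root_sum_quadratic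
    (f := C (a : ZMod ℓ) * X ^ 2 + C 0 * X + C (-1))
    (g := C (b : ZMod ℓ) * X ^ 2 + C 0 * X + C 0)
    (degree_quadratic ha) (degree_quadratic hb)
    (by rw [ZMod.card]; exact (Fact.out : ℓ.Prime).eq_two_or_odd.resolve_left hℓ)
  obtain ⟨S, rfl⟩ := ZMod.ringHom_surjective PadicInt.toZMod s
  obtain ⟨T, rfl⟩ := ZMod.ringHom_surjective PadicInt.toZMod t
  set u : ℤ_[ℓ] := a * S ^ 2 + b * T ^ 2
  have hu : PadicInt.toZMod u = 1 := by
    simp only [eval_add, eval_mul, eval_pow, eval_C, eval_X, zero_mul, add_zero] at hst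
    simp only [u, map_add, map_mul, map_pow, map_intCast]
    linear_combination hst
  obtain ⟨w, hw⟩ := PadicInt.isSquare_of_isSquare_toZMod hℓ (hu ▸ IsSquare.one) (by simp [hu])
  have hw0 : w ≠ 0 := by rintro rfl; simp [hw] at hu
  refine hilbertSymbol_eq_one_iff.mpr ⟨S, T, w, by simp [hw0], ?_⟩
  simpa [u, sq] using congrArg ((↑) : ℤ_[ℓ] → ℚ_[ℓ]) hw.symm

theorem hilbertSymbol_eq_neg_one_of_not_isSquare {a b : ℤ} (ha : ¬IsSquare (a : ZMod ℓ))
    (hb : (ℓ : ℤ) ∣ b) (hb2 : ¬(ℓ : ℤ) ^ 2 ∣ b) : hilbertSymbol ℓ a b = -1 := by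
  refine hilbertSymbol_eq_neg_one_iff.mpr fun ⟨x, y, z, hne, h⟩ => ?_
  obtain ⟨x, y, z, h1, h⟩ := Padic.exists_padicInt_sq_eq_add_of_ne_zero (a := a) (b := b) hne
    (by simpa using h)
  exact PadicInt.sq_ne_add_of_not_isSquare ha hb hb2 h1 h

theorem hilbertSymbol_two_eq_neg_one {a b : ℤ} (ha : a % 8 = 5) (hb : b % 4 = 2) :
    hilbertSymbol 2 a b = -1 := by
  refine hilbertSymbol_eq_neg_one_iff.mpr fun ⟨x, y, z, hne, h⟩ => ?_
  obtain ⟨x, y, z, h1, h⟩ := Padic.exists_padicInt_sq_eq_add_of_ne_zero (a := a) (b := b) hne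
    (by simpa using h)
  exact PadicInt.sq_ne_add_of_emod_eight_eq_five ha hb h1 h

end Local

theorem legendreSym_eq_prod_primeFactors (q : ℕ) [Fact q.Prime] {n : ℕ} (hn : Squarefree n) :
    legendreSym q n = ∏ ℓ ∈ n.primeFactors, legendreSym q ℓ := by
  conv_lhs => rw [← Nat.prod_primeFactors_of_squarefree hn]
  push_cast
  exact map_prod (legendreSym.hom q) _ _

theorem legendreSym_eq_neg_one_of_not_isSquare {q ℓ : ℕ} [Fact q.Prime] [Fact ℓ.Prime]
    (hq : q % 4 = 1) (hℓ : ℓ ≠ 2) (h : ¬IsSquare (q : ZMod ℓ)) : legendreSym q ℓ = -1 := by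
  rw [← legendreSym.quadratic_reciprocity_one_mod_four hq hℓ]
  exact (legendreSym.eq_neg_one_iff' ℓ).mpr h

theorem legendreSym_two_eq_neg_one {q : ℕ} [Fact q.Prime] (hq : q % 8 = 5) :
    legendreSym q 2 = -1 := by
  rw [legendreSym.at_two (by omega), ZMod.χ₈_nat_eq_if_mod_eight, if_neg (by omega),
    if_neg (by omega)]

theorem isSquare_neg_of_legendreSym_primeFactors {q Δ : ℕ} [Fact q.Prime] (hq : q % 4 = 1)
    (hqΔ : ¬q ∣ Δ) (hsf : Squarefree Δ) (heven : Even Δ.primeFactors.card)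
    (h : ∀ ℓ ∈ Δ.primeFactors, legendreSym q ℓ = -1) : IsSquare (-(Δ : ZMod q)) := by
  have hsym : legendreSym q (-Δ) = 1 := by
    rw [neg_eq_neg_one_mul, legendreSym.mul, legendreSym.at_neg_one (by omega),
      ZMod.χ₄_nat_one_mod_four hq, legendreSym_eq_prod_primeFactors q hsf,
      Finset.prod_congr rfl h, Finset.prod_const, heven.neg_one_pow, one_mul]
  have hne : ((-Δ : ℤ) : ZMod q) ≠ 0 := by
    simpa [ZMod.natCast_eq_zero_iff] using hqΔ
  simpa using (legendreSym.eq_one_iff q hne).mp hsym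

theorem Nat.exists_prime_gt_modEq_primePow {S : Finset ℕ} (hS : ∀ ℓ ∈ S, ℓ.Prime)
    (e r : ℕ → ℕ) (hr : ∀ ℓ ∈ S, ¬ℓ ∣ r ℓ) (N : ℕ) :
    ∃ q > N, q.Prime ∧ ∀ ℓ ∈ S, q ≡ r ℓ [MOD ℓ ^ e ℓ] := by
  have hcop : Set.Pairwise S fun ℓ ℓ' => (ℓ ^ e ℓ).Coprime (ℓ' ^ e ℓ') := fun ℓ hℓ ℓ' hℓ' hne =>
    Nat.Coprime.pow _ _ ((Nat.coprime_primes (hS ℓ hℓ) (hS ℓ' hℓ')).mpr hne)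
  obtain ⟨c, hc⟩ := Nat.chineseRemainderOfFinset r (fun ℓ => ℓ ^ e ℓ) S
    (fun ℓ hℓ => pow_ne_zero _ (hS ℓ hℓ).ne_zero) hcop
  have hcM : c.Coprime (∏ ℓ ∈ S, ℓ ^ e ℓ) := Nat.Coprime.prod_right fun ℓ hℓ => by
    rw [Nat.Coprime, (hc ℓ hℓ).gcd_eq]
    exact Nat.Coprime.pow_right _ ((hS ℓ hℓ).coprime_iff_not_dvd.mpr (hr ℓ hℓ)).symm
  obtain ⟨q, hqN, hq, hqc⟩ := Nat.forall_exists_prime_gt_and_modEq N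
    (Finset.prod_ne_zero_iff.mpr fun ℓ hℓ => pow_ne_zero _ (hS ℓ hℓ).ne_zero) hcM
  exact ⟨q, hqN, hq, fun ℓ hℓ => (hqc.of_dvd (Finset.dvd_prod_of_mem _ hℓ)).trans (hc ℓ hℓ)⟩

theorem exists_prime_gt_hashimoto_residues {Δ p : ℕ} (hp : p.Prime) (hpΔ : ¬p ∣ 2 * Δ) (N : ℕ) :
    ∃ q > N, q.Prime ∧ q ≡ 1 [MOD p] ∧ q % 8 = (if 2 ∣ Δ then 5 else 1) ∧
      ∀ ℓ ∈ Δ.primeFactors, ℓ ≠ 2 → ¬IsSquare (q : ZMod ℓ) := by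
  have hnr (ℓ : ℕ) : ∃ n : ℕ, ℓ.Prime → ℓ ≠ 2 → ¬IsSquare (n : ZMod ℓ) := by
    by_cases hℓ : ℓ.Prime ∧ ℓ ≠ 2
    · have := Fact.mk hℓ.1
      obtain ⟨u, hu⟩ := FiniteField.exists_nonsquare (F := ZMod ℓ)
        (by rw [ZMod.ringChar_zmod_n]; exact hℓ.2)
      exact ⟨u.val, fun _ _ => by simpa using hu⟩
    · exact ⟨0, fun h1 h2 => (hℓ ⟨h1, h2⟩).elim⟩
  choose n hn using hnr
  have hp2 : p ≠ 2 := by rintro rfl; exact hpΔ (dvd_mul_right 2 Δ)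
  have hpΔ' : ¬p ∣ Δ := fun h => hpΔ (h.mul_left 2)
  let S := insert 2 (insert p Δ.primeFactors)
  have hS : ∀ ℓ ∈ S, ℓ.Prime := by
    simp only [S, Finset.mem_insert, Nat.mem_primeFactors]
    rintro ℓ (rfl | rfl | ⟨hℓ, -⟩)
    exacts [Nat.prime_two, hp, hℓ]
  let r (ℓ : ℕ) : ℕ := if ℓ = 2 then (if 2 ∣ Δ then 5 else 1) else if ℓ ∣ Δ then n ℓ else 1
  have hr : ∀ ℓ ∈ S, ¬ℓ ∣ r ℓ := by
    intro ℓ hℓ hdvd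
    simp only [r] at hdvd
    split_ifs at hdvd with h2
    · subst h2; omega
    · subst h2; omega
    · exact hn ℓ (hS ℓ hℓ) h2 ⟨0, by simp [(ZMod.natCast_eq_zero_iff _ _).mpr hdvd]⟩
    · exact (hS ℓ hℓ).not_dvd_one hdvd
  obtain ⟨q, hqN, hq, hqr⟩ :=
    Nat.exists_prime_gt_modEq_primePow hS (fun ℓ => if ℓ = 2 then 3 else 1) r hr N
  refine ⟨q, hqN, hq, ?_, ?_, fun ℓ hℓ h2 => ?_⟩
  · simpa [r, hp2, hpΔ'] using hqr p (by simp [S])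
  · have h8 := hqr 2 (by simp [S])
    simp only [r, if_true] at h8
    split_ifs at h8 ⊢ <;> exact h8
  · have hℓq := hqr ℓ (by simp [S, hℓ])
    simp only [r, h2, if_false, Nat.dvd_of_mem_primeFactors hℓ, if_true, pow_one] at hℓq
    rw [(ZMod.natCast_eq_natCast_iff _ _ _).mpr hℓq]
    exact hn ℓ (Nat.prime_of_mem_primeFactors hℓ) h2

theorem hilbertSymbol_natCast_neg_eq_neg_one_iff {q Δ : ℕ} [Fact q.Prime] (hsf : Squarefree Δ)
    (hqΔ : ¬q ∣ Δ) (hq8 : q % 8 = if 2 ∣ Δ then 5 else 1)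
    (hres : ∀ ℓ ∈ Δ.primeFactors, ℓ ≠ 2 → ¬IsSquare (q : ZMod ℓ))
    (hsq : IsSquare (-(Δ : ZMod q))) (ℓ : ℕ) [Fact ℓ.Prime] :
    hilbertSymbol ℓ q (-Δ) = -1 ↔ ℓ ∣ Δ := by
  have hℓ : ℓ.Prime := Fact.out
  rw [show (q : ℚ) = ((q : ℤ) : ℚ) by norm_cast, show -(Δ : ℚ) = ((-Δ : ℤ) : ℚ) by norm_cast]
  by_cases hℓΔ : ℓ ∣ Δ
  · refine iff_of_true ?_ hℓΔ
    have hℓ2Δ : ¬ℓ ^ 2 ∣ Δ := fun h => hℓ.one_lt.ne' (Nat.isUnit_iff.mp (hsf ℓ (by rwa [← sq])))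
    rcases eq_or_ne ℓ 2 with rfl | h2
    · rw [if_pos hℓΔ] at hq8
      exact hilbertSymbol_two_eq_neg_one (by omega) (by omega)
    · have hℓmem : ℓ ∈ Δ.primeFactors := Nat.mem_primeFactors.mpr ⟨hℓ, hℓΔ, hsf.ne_zero⟩
      refine hilbertSymbol_eq_neg_one_of_not_isSquare (by simpa using hres ℓ hℓmem h2) ?_ ?_
      · rw [Int.dvd_neg]; exact_mod_cast hℓΔ
      · rw [Int.dvd_neg]; exact_mod_cast hℓ2Δ
  · refine iff_of_false ?_ hℓΔ
    suffices hilbertSymbol ℓ (q : ℤ) (-Δ : ℤ) = 1 by rw [this]; norm_num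
    rcases eq_or_ne ℓ 2 with rfl | h2
    · rw [if_neg hℓΔ] at hq8
      have hq2 := Padic.isSquare_intCast_two (a := q) (by omega)
      exact hilbertSymbol_eq_one_of_isSquare_left (by simpa using hq2)
    rcases eq_or_ne ℓ q with rfl | hℓq
    · have hΔq := Padic.isSquare_intCast_of_isSquare_zmod (a := -Δ) h2 (by simpa using hsq)
        (by simpa [ZMod.natCast_eq_zero_iff] using hqΔ)
      exact hilbertSymbol_eq_one_of_isSquare_right (by simpa using hΔq)
    · refine hilbertSymbol_eq_one_of_not_dvd h2 ?_ (by rw [Int.dvd_neg]; exact_mod_cast hℓΔ)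
      exact_mod_cast (Nat.prime_dvd_prime_iff_eq hℓ Fact.out).not.mpr hℓq

theorem exists_hashimoto_auxiliary_prime_general (Δ p : ℕ)
    (hsf : Squarefree Δ) (heven : Even Δ.primeFactors.card)
    (hp : p.Prime) (hgcd : Nat.gcd p (2 * Δ) = 1) :
    ∃ q : ℕ, q.Prime ∧ q % 4 = 1 ∧ IsSquare (q : ZMod p) ∧
      ∀ (ℓ : ℕ) [Fact ℓ.Prime], (hilbertSymbol ℓ (q : ℚ) (-(Δ : ℚ)) = -1 ↔ ℓ ∣ Δ) := by
  have hpΔ : ¬p ∣ 2 * Δ := fun h => hp.one_lt.ne' (by simpa [hgcd] using Nat.dvd_gcd dvd_rfl h)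
  obtain ⟨q, hqΔ, hq, hqp, hq8, hres⟩ := exists_prime_gt_hashimoto_residues hp hpΔ Δ
  have := Fact.mk hq
  have hq4 : q % 4 = 1 := by split_ifs at hq8 <;> omega
  have hqΔ' : ¬q ∣ Δ := fun h => hqΔ.not_ge (Nat.le_of_dvd (Nat.pos_of_ne_zero hsf.ne_zero) h)
  have hsq : IsSquare (-(Δ : ZMod q)) :=
    isSquare_neg_of_legendreSym_primeFactors hq4 hqΔ' hsf heven fun ℓ hℓ => by
      have := Fact.mk (Nat.prime_of_mem_primeFactors hℓ)
      rcases eq_or_ne ℓ 2 with rfl | h2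
      · rw [if_pos (Nat.dvd_of_mem_primeFactors hℓ)] at hq8
        exact_mod_cast legendreSym_two_eq_neg_one hq8
      · exact legendreSym_eq_neg_one_of_not_isSquare hq4 h2 (hres ℓ hℓ h2)
  refine ⟨q, hq, hq4, ?_, hilbertSymbol_natCast_neg_eq_neg_one_iff hsf hqΔ' hq8 hres hsq⟩
  rw [(ZMod.natCast_eq_natCast_iff q 1 p).mpr hqp, Nat.cast_one]
  exact IsSquare.one

/-- For an odd prime `p` with `gcd(p, 2Δ) = 1`, where `Δ` is a squarefree
positive integer with an even number of prime factors, there exists a prime `q ≡ 1 (mod 4)`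
which is a quadratic residue mod `p` and such that the Hilbert symbol `(q, -Δ)_ℓ = -1`
if and only if `ℓ ∣ Δ`  (existence of the auxiliary prime in the Hashimoto model). -/
theorem exists_hashimoto_auxiliary_prime (Δ p : ℕ) (hΔpos : 0 < Δ)
    (hsf : Squarefree Δ) (heven : Even Δ.primeFactors.card)
    (hp : p.Prime) (hodd : Odd p) (hgcd : Nat.gcd p (2 * Δ) = 1) :
    ∃ q : ℕ, q.Prime ∧ q % 4 = 1 ∧ IsSquare (q : ZMod p) ∧
      ∀ (ℓ : ℕ) [Fact ℓ.Prime], (hilbertSymbol ℓ (q : ℚ) (-(Δ : ℚ)) = -1 ↔ ℓ ∣ Δ) :=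
  exists_hashimoto_auxiliary_prime_general Δ p hsf heven hp hgcd
end

section
/- Let μ be a measure on Z_p with values in a p-adic Banach space, with associated Mahler power series F(T) = Σ_{r≥0} a_r T^r where a_r = ∫_{Z_p} binom(t,r) dμ(t). Then the restriction μ^× of μ to Z_p^× (extending functions by zero on pZ_p) has associated power series F^×(T) = F(T) - (1/p)·Σ_{ζ ∈ μ_p} F(ζT + ζ - 1), where μ_p denotes the p-th roots of unity. -/
/-!
For `‖ζ - 1‖ < 1` the Mahler series `∑ₛ (ζ - 1)ˢ binom(t, s)` converges uniformly to a continuous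
function `t ↦ ζᵗ` on `ℤ_p` extending `m ↦ ζᵐ` on `ℕ`. Summing over the `p`-th roots of unity, the
orthogonality `∑_ζ ζᵐ = p·[p ∣ m]` propagates by density of `ℕ` to `∑_ζ ζᵗ = p · 1_{pℤ_p}(t)`, so
`binom(t, n) · 1_{ℤ_p^×}(t) = binom(t, n) - p⁻¹ ∑_ζ binom(t, n) ζᵗ`. Finally `binom(t, n) ζᵗ` has
Mahler coefficients `C(r, n) ζⁿ (ζ - 1)^(r - n)`, by `ζᵗ = ζⁿ ζ^(t - n)` and
`C(n + s, n) binom(t, n + s) = binom(t, n) binom(t - n, s)`; apply `μ` term by term.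
-/

open Finset

theorem norm_eq_one_of_norm_sub_one_lt {R : Type*} [NormedRing R] [NormOneClass R]
    [IsUltrametricDist R] {x : R} (hx : ‖x - 1‖ < 1) : ‖x‖ = 1 := by
  rw [← sub_add_cancel x 1, IsUltrametricDist.norm_add_eq_max_of_norm_ne_norm
    (by rw [norm_one]; exact hx.ne), norm_one, max_eq_right hx.le]

theorem norm_choose_mul_pow_le {F : Type*} [NormedField F] [IsUltrametricDist F] {ζ : F}
    (hζ : ‖ζ - 1‖ < 1) (n r : ℕ) :
    ‖(r.choose n : F) * ζ ^ n * (ζ - 1) ^ (r - n)‖ ≤ ‖ζ - 1‖ ^ (r - n) := by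
  rw [norm_mul, norm_mul, norm_pow, norm_pow, norm_eq_one_of_norm_sub_one_lt hζ, one_pow, mul_one]
  exact mul_le_of_le_one_left (by positivity) (IsUltrametricDist.norm_natCast_le_one F _)

theorem sum_pow_eq_zero_of_mul_mem_iff {F : Type*} [Field F] {S : Finset F} {ζ₀ : F}
    (hζ₀ : ζ₀ ≠ 0) (hS : ∀ ζ, ζ₀ * ζ ∈ S ↔ ζ ∈ S) {m : ℕ} (hm : ζ₀ ^ m ≠ 1) :
    ∑ ζ ∈ S, ζ ^ m = 0 := by
  have hinv : ζ₀ ^ m * ∑ ζ ∈ S, ζ ^ m = ∑ ζ ∈ S, ζ ^ m := by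
    rw [mul_sum]
    exact sum_equiv (Equiv.mulLeft₀ ζ₀ hζ₀) (fun ζ => (hS ζ).symm) fun ζ _ => by
      simp [mul_pow]
  have : (ζ₀ ^ m - 1) * ∑ ζ ∈ S, ζ ^ m = 0 := by rw [sub_mul, hinv]; ring
  exact (mul_eq_zero.1 this).resolve_left (sub_ne_zero.2 hm)

theorem sum_pow_eq_ite_of_mem_iff {F : Type*} [Field F] {n : ℕ} (hn : n.Prime) {S : Finset F}
    (hS : ∀ ζ, ζ ∈ S ↔ ζ ^ n = 1) (hcard : S.card = n) (m : ℕ) :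
    ∑ ζ ∈ S, ζ ^ m = if n ∣ m then (n : F) else 0 := by
  split_ifs with hdvd
  · obtain ⟨k, rfl⟩ := hdvd
    rw [sum_congr rfl fun ζ hζ => by rw [pow_mul, (hS ζ).1 hζ, one_pow]]
    simp [hcard]
  · obtain ⟨ζ₀, hζ₀S, hζ₀⟩ := exists_mem_ne (hcard ▸ hn.one_lt) 1
    have hζ₀n : ζ₀ ^ n = 1 := (hS ζ₀).1 hζ₀S
    have horder : orderOf ζ₀ = n :=
      ((hn.eq_one_or_self_of_dvd _ (orderOf_dvd_of_pow_eq_one hζ₀n)).resolve_left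
        fun h => hζ₀ (orderOf_eq_one_iff.1 h))
    refine sum_pow_eq_zero_of_mul_mem_iff (IsUnit.of_pow_eq_one hζ₀n hn.ne_zero).ne_zero
      (fun ζ => by rw [hS, hS, mul_pow, hζ₀n, one_mul])
      fun h => hdvd (horder ▸ orderOf_dvd_of_pow_eq_one h)

namespace PadicInt

variable {p : ℕ} [Fact p.Prime]

theorem coe_choose (t : ℤ_[p]) (r : ℕ) :
    ((Ring.choose t r : ℤ_[p]) : ℚ_[p]) =
      (r.factorial : ℚ_[p])⁻¹ * (descPochhammer ℚ_[p] r).eval (t : ℚ_[p]) := by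
  rw [← descPochhammer_map (algebraMap ℤ ℚ_[p]), Polynomial.eval_map_algebraMap,
    Polynomial.aeval_eq_smeval]
  exact (Ring.map_choose Coe.ringHom t r).trans (Ring.choose_eq_smul ..)

theorem continuous_ite_norm_eq_one {X : Type*} [TopologicalSpace X] (a b : X) :
    Continuous fun t : ℤ_[p] => if ‖t‖ = 1 then a else b := by
  refine Continuous.if (fun t ht => ?_) continuous_const continuous_const
  have hsphere : {t : ℤ_[p] | ‖t‖ = 1} = Metric.sphere 0 1 := by ext; simp
  rw [hsphere, (IsUltrametricDist.isClopen_sphere 0 one_ne_zero).frontier_eq] at ht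
  exact ht.elim

end PadicInt

section Mahler

variable (p : ℕ) [Fact p.Prime] (K : Type*) [NontriviallyNormedField K] [NormedAlgebra ℚ_[p] K]

noncomputable def mahlerK (r : ℕ) : C(ℤ_[p], K) where
  toFun t := algebraMap ℚ_[p] K (mahler r t)
  continuous_toFun := (continuous_algebraMap ℚ_[p] K).comp
    (continuous_subtype_val.comp (mahler r).continuous)

variable {p K}

theorem mahlerK_apply (r : ℕ) (t : ℤ_[p]) :
    mahlerK p K r t = algebraMap ℚ_[p] K ((Ring.choose t r : ℤ_[p]) : ℚ_[p]) := rfl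

theorem norm_mahlerK_le_one (r : ℕ) : ‖mahlerK p K r‖ ≤ 1 :=
  (ContinuousMap.norm_le _ zero_le_one).2 fun t => by
    rw [mahlerK_apply, norm_algebraMap', ← PadicInt.norm_def]
    exact PadicInt.norm_le_one _

theorem mahlerK_natCast (r m : ℕ) : mahlerK p K r m = m.choose r := by
  rw [mahlerK_apply, Ring.choose_natCast]
  simp

theorem choose_mul_mahlerK_add (n s : ℕ) (t : ℤ_[p]) :
    ((n + s).choose n : K) * mahlerK p K (n + s) t = mahlerK p K n t * mahlerK p K s (t - n) := by
  have h := congrArg (fun x : ℤ_[p] => algebraMap ℚ_[p] K x)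
    (Ring.choose_smul_choose t (Nat.le_add_right n s))
  simpa [mahlerK_apply, nsmul_eq_mul] using h

variable [CompleteSpace K]

theorem summable_smul_mahlerK {a : ℕ → K} (ha : Summable fun r => ‖a r‖) :
    Summable fun r => a r • mahlerK p K r :=
  ha.of_norm_bounded fun r =>
    (norm_smul_le _ _).trans (mul_le_of_le_one_right (norm_nonneg _) (norm_mahlerK_le_one r))

theorem hasSum_mul_mahlerK_apply {a : ℕ → K} (ha : Summable fun r => ‖a r‖) (t : ℤ_[p]) :
    HasSum (fun r => a r * mahlerK p K r t) ((∑' r, a r • mahlerK p K r) t) :=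
  (summable_smul_mahlerK ha).hasSum.mapL (ContinuousMap.evalCLM K t)

variable (p) in
/-- `t ↦ ζ ^ t`. Only meaningful for `‖ζ - 1‖ < 1`; otherwise the series need not converge and
`tsum` returns `0`. -/
noncomputable def padicPow (ζ : K) : C(ℤ_[p], K) := ∑' s, (ζ - 1) ^ s • mahlerK p K s

section padicPow

variable {ζ : K} (hζ : ‖ζ - 1‖ < 1)
include hζ

theorem hasSum_padicPow_apply (t : ℤ_[p]) :
    HasSum (fun s => (ζ - 1) ^ s * mahlerK p K s t) (padicPow p ζ t) :=
  hasSum_mul_mahlerK_apply (by simpa using summable_geometric_of_lt_one (norm_nonneg _) hζ) t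

theorem padicPow_natCast (m : ℕ) : padicPow p ζ m = ζ ^ m := by
  have hfinite : HasSum (fun s => (ζ - 1) ^ s * mahlerK p K s m)
      (∑ s ∈ range (m + 1), (ζ - 1) ^ s * mahlerK p K s m) :=
    hasSum_sum_of_ne_finset_zero fun s hs => by
      rw [mahlerK_natCast, Nat.choose_eq_zero_of_lt (by simpa using hs), Nat.cast_zero, mul_zero]
  rw [(hasSum_padicPow_apply hζ m).unique hfinite, ← sub_add_cancel ζ 1, add_pow, sub_add_cancel]
  simp [mahlerK_natCast, mul_comm]

theorem padicPow_add_natCast (x : ℤ_[p]) (n : ℕ) :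
    padicPow p ζ (x + n) = ζ ^ n * padicPow p ζ x := by
  have h : (fun x : ℤ_[p] => padicPow p ζ (x + n)) = fun x => ζ ^ n * padicPow p ζ x :=
    PadicInt.denseRange_natCast.equalizer (by fun_prop) (by fun_prop) <| funext fun m => by
      simp only [Function.comp_apply]
      rw [← Nat.cast_add, padicPow_natCast hζ, padicPow_natCast hζ, pow_add, mul_comm]
  exact congrFun h x

end padicPow

theorem sum_padicPow_apply {S : Finset K} (hS : ∀ ζ, ζ ∈ S ↔ ζ ^ p = 1) (hcard : S.card = p)
    (hSnorm : ∀ ζ ∈ S, ‖ζ - 1‖ < 1) (t : ℤ_[p]) :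
    ∑ ζ ∈ S, padicPow p ζ t = if ‖t‖ = 1 then 0 else (p : K) := by
  have h : (fun t : ℤ_[p] => ∑ ζ ∈ S, padicPow p ζ t) = fun t => if ‖t‖ = 1 then 0 else (p : K) :=
    PadicInt.denseRange_natCast.equalizer (by fun_prop) (PadicInt.continuous_ite_norm_eq_one _ _)
      <| funext fun m => by
        simp only [Function.comp_apply, PadicInt.norm_natCast_eq_one_iff]
        rw [sum_congr rfl fun ζ hζ => padicPow_natCast (hSnorm ζ hζ) m,
          sum_pow_eq_ite_of_mem_iff Fact.out hS hcard]
        simp only [Nat.Prime.coprime_iff_not_dvd Fact.out, ite_not]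
  exact congrFun h t

theorem hasSum_choose_mul_pow_smul_mahlerK {ζ : K} (hζ : ‖ζ - 1‖ < 1) (n : ℕ) :
    HasSum (fun r => ((r.choose n : K) * ζ ^ n * (ζ - 1) ^ (r - n)) • mahlerK p K r)
      (mahlerK p K n * padicPow p ζ) := by
  have hsum : Summable fun r => ‖(r.choose n : K) * ζ ^ n * (ζ - 1) ^ (r - n)‖ := by
    have : IsUltrametricDist K := .of_normedAlgebra ℚ_[p]
    refine .of_nonneg_of_le (fun _ => norm_nonneg _) (norm_choose_mul_pow_le hζ n) ?_
    refine (summable_nat_add_iff n).1 ?_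
    simpa using summable_geometric_of_lt_one (norm_nonneg _) hζ
  convert (summable_smul_mahlerK hsum).hasSum using 1
  ext t
  refine HasSum.unique ?_ (hasSum_mul_mahlerK_apply hsum t)
  rw [← hasSum_nat_add_iff' n, sum_eq_zero fun r hr => by
    rw [Nat.choose_eq_zero_of_lt (mem_range.1 hr), Nat.cast_zero, zero_mul, zero_mul, zero_mul],
    sub_zero, ContinuousMap.mul_apply]
  have hshift := padicPow_add_natCast hζ (t - (n : ℤ_[p])) n
  rw [sub_add_cancel] at hshift
  rw [hshift, mul_left_comm, ← mul_assoc]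
  refine ((hasSum_padicPow_apply hζ _).mul_left (ζ ^ n * mahlerK p K n t)).congr_fun fun s => ?_
  rw [Nat.add_sub_cancel, add_comm s n, mul_mul_mul_comm, ← choose_mul_mahlerK_add]
  ring

end Mahler

/-- Let `μ` be a `K`-valued measure on `ℤ_p` (a continuous linear
functional on `C(ℤ_p, K)`), with Mahler coefficients `a_r = ∫ binom(t,r) dμ(t)`, so its
associated power series is `F(T) = ∑_r a_r T^r`.  Then the restriction `μ^×` of `μ` to
`ℤ_p^×` (extending functions by zero on `pℤ_p`) has associated power series
`F^×(T) = F(T) - (1/p)·∑_{ζ ∈ μ_p} F(ζT + ζ - 1)`; coefficientwise, for every `n`,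
`∫_{ℤ_p^×} binom(t,n) dμ = a_n - (1/p)·∑_{ζ^p=1} ∑_r a_r·C(r,n)·ζ^n·(ζ-1)^{r-n}`. -/
theorem restriction_to_units_power_series
    (p : ℕ) [Fact p.Prime] (K : Type*)
    [NontriviallyNormedField K] [NormedAlgebra ℚ_[p] K] [CompleteSpace K]
    (μ : C(ℤ_[p], K) →L[K] K)
    (binomC : ℕ → C(ℤ_[p], K))
    (hbinom : ∀ (r : ℕ) (t : ℤ_[p]), binomC r t =
      algebraMap ℚ_[p] K ((r.factorial : ℚ_[p])⁻¹ * (descPochhammer ℚ_[p] r).eval (t : ℚ_[p])))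
    (binomStar : ℕ → C(ℤ_[p], K))
    (hstar : ∀ (r : ℕ) (t : ℤ_[p]), binomStar r t = if ‖t‖ = 1 then binomC r t else 0)
    (S : Finset K) (hS : ∀ ζ : K, ζ ∈ S ↔ ζ ^ p = 1) (hcard : S.card = p)
    (hSnorm : ∀ ζ ∈ S, ‖ζ - 1‖ < 1) :
    ∀ n : ℕ, μ (binomStar n) = μ (binomC n) -
      (p : K)⁻¹ * ∑ ζ ∈ S, ∑' r : ℕ,
        μ (binomC r) * (r.choose n : K) * ζ ^ n * (ζ - 1) ^ (r - n) := by
  intro n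
  obtain rfl : binomC = mahlerK p K := funext fun r => ContinuousMap.ext fun t => by
    rw [hbinom, mahlerK_apply, PadicInt.coe_choose]
  have hp : (p : K) ≠ 0 := by
    rw [← map_natCast (algebraMap ℚ_[p] K)]
    exact (map_ne_zero _).2 (Nat.cast_ne_zero.2 (Fact.out : p.Prime).ne_zero)
  have hunits :
      binomStar n = mahlerK p K n - (p : K)⁻¹ • ∑ ζ ∈ S, mahlerK p K n * padicPow p ζ := by
    ext t
    simp only [hstar, ContinuousMap.sub_apply, ContinuousMap.smul_apply, ContinuousMap.sum_apply,
      ContinuousMap.mul_apply, smul_eq_mul, ← mul_sum, sum_padicPow_apply hS hcard hSnorm]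
    split_ifs
    · simp
    · rw [mul_left_comm, inv_mul_cancel₀ hp, mul_one, sub_self]
  rw [hunits, map_sub, map_smul, map_sum, smul_eq_mul]
  congr 2
  refine sum_congr rfl fun ζ hζ => ?_
  rw [← ((hasSum_choose_mul_pow_smul_mahlerK (hSnorm ζ hζ) n).mapL μ).tsum_eq]
  exact tsum_congr fun r => by rw [map_smul, smul_eq_mul]; ring
end

section
/- Let φ^{(l,m)}(z₁,z₂) = (z₁z̄₁)^l · z₂^{2m} · e^{-2π(z₁z̄₁ + z₂z̄₂)} for nonnegative integers l, m, a Schwartz function on C². Let X' be the second-order differential operator X' = z₂²·∂²/∂z₁∂z̄₁ + z̄₁z₂·∂²/∂z̄₁∂z̄₂ + z₁z₂·∂²/∂z₁∂z̄₂ + z₁z̄₁·∂²/∂z̄₂² + z₂·∂/∂z̄₂. Then X'φ^{(l,m)} = l²·φ^{(l-1,m+1)} - 4π(2l+1)·φ^{(l,m+1)} + (4π)²·φ^{(l+1,m+1)}. -/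
open Complex

/-- The Wirtinger derivative `∂f/∂z = (1/2)(∂f/∂x - i ∂f/∂y)` of `f : ℂ → ℂ`
(real Fréchet derivative evaluated on `1` and `i`). -/
noncomputable def wirtingerDz (f : ℂ → ℂ) (z : ℂ) : ℂ :=
  (1 / 2 : ℂ) * (fderiv ℝ f z 1 - Complex.I * fderiv ℝ f z Complex.I)

/-- The conjugate Wirtinger derivative `∂f/∂z̄ = (1/2)(∂f/∂x + i ∂f/∂y)`. -/
noncomputable def wirtingerDzbar (f : ℂ → ℂ) (z : ℂ) : ℂ :=
  (1 / 2 : ℂ) * (fderiv ℝ f z 1 + Complex.I * fderiv ℝ f z Complex.I)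

/-- `∂/∂z₁` for functions of two complex variables. -/
noncomputable def D1 (f : ℂ → ℂ → ℂ) : ℂ → ℂ → ℂ :=
  fun z₁ z₂ => wirtingerDz (fun w => f w z₂) z₁

/-- `∂/∂z̄₁` for functions of two complex variables. -/
noncomputable def D1bar (f : ℂ → ℂ → ℂ) : ℂ → ℂ → ℂ :=
  fun z₁ z₂ => wirtingerDzbar (fun w => f w z₂) z₁

/-- `∂/∂z̄₂` for functions of two complex variables. -/
noncomputable def D2bar (f : ℂ → ℂ → ℂ) : ℂ → ℂ → ℂ :=
  fun z₁ z₂ => wirtingerDzbar (fun w => f z₁ w) z₂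

/-- The Schwartz function `φ^{(l,m)}(z₁,z₂) = (z₁z̄₁)^l z₂^{2m} e^{-2π(z₁z̄₁ + z₂z̄₂)}`. -/
noncomputable def phiLM (l m : ℕ) : ℂ → ℂ → ℂ := fun z₁ z₂ =>
  (z₁ * (starRingEnd ℂ) z₁) ^ l * z₂ ^ (2 * m) *
    Complex.exp (-(2 * (Real.pi : ℂ)) *
      (z₁ * (starRingEnd ℂ) z₁ + z₂ * (starRingEnd ℂ) z₂))

/-- The second-order differential operator
`X' = z₂²·∂²/∂z₁∂z̄₁ + z̄₁z₂·∂²/∂z̄₁∂z̄₂ + z₁z₂·∂²/∂z₁∂z̄₂ + z₁z̄₁·∂²/∂z̄₂² + z₂·∂/∂z̄₂`. -/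
noncomputable def Xprime (f : ℂ → ℂ → ℂ) : ℂ → ℂ → ℂ := fun z₁ z₂ =>
  z₂ ^ 2 * D1 (D1bar f) z₁ z₂ +
  (starRingEnd ℂ) z₁ * z₂ * D1bar (D2bar f) z₁ z₂ +
  z₁ * z₂ * D1 (D2bar f) z₁ z₂ +
  z₁ * (starRingEnd ℂ) z₁ * D2bar (D2bar f) z₁ z₂ +
  z₂ * D2bar f z₁ z₂

/-!
Both factors of `φ^{(l,m)}` are of the form `G_{n,k}(z) = zⁿ z̄ᵏ e^{α z z̄}` (with `α = -2π`):
`(z₁z̄₁)^l e^{-2π z₁z̄₁} = G_{l,l}(z₁)` and `z₂^{2m} e^{-2π z₂z̄₂} = G_{2m,0}(z₂)`. Each partial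
Wirtinger derivative in `X'` acts on one factor only, and on this family
`∂G_{n,k} = n G_{n-1,k} + α G_{n,k+1}` and `∂̄G_{n,k} = k G_{n,k-1} + α G_{n+1,k}`,
because the real derivative of `G_{n,k}` at `z` is `v ↦ A v + B v̄` with these `A, B`.
Collecting the five terms of `X'φ^{(l,m)}` gives the formula.
-/

open ComplexConjugate

section Wirtinger

variable {f : ℂ → ℂ} {z : ℂ}

theorem wirtingerDz_eq_of_hasFDerivAt {A B : ℂ}
    (h : HasFDerivAt f (A • ContinuousLinearMap.id ℝ ℂ + B • conjCLE.toContinuousLinearMap) z) :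
    wirtingerDz f z = A := by
  simp only [wirtingerDz, h.fderiv, add_apply, smul_apply,
    ContinuousLinearMap.id_apply, ContinuousLinearEquiv.coe_coe, conjCLE_apply, map_one, conj_I,
    smul_eq_mul]
  linear_combination (B - A) / 2 * I_sq

theorem wirtingerDzbar_eq_of_hasFDerivAt {A B : ℂ}
    (h : HasFDerivAt f (A • ContinuousLinearMap.id ℝ ℂ + B • conjCLE.toContinuousLinearMap) z) :
    wirtingerDzbar f z = B := by
  simp only [wirtingerDzbar, h.fderiv, add_apply,
    smul_apply, ContinuousLinearMap.id_apply, ContinuousLinearEquiv.coe_coe,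
    conjCLE_apply, map_one, conj_I, smul_eq_mul]
  linear_combination (A - B) / 2 * I_sq

theorem wirtingerDz_const_mul (c : ℂ) :
    wirtingerDz (fun w => c * f w) z = c * wirtingerDz f z := by
  simp only [wirtingerDz, ← smul_eq_mul (a := c), ← Pi.smul_def, fderiv_const_smul_field,
    Pi.smul_apply, smul_apply]
  ring

theorem wirtingerDzbar_const_mul (c : ℂ) :
    wirtingerDzbar (fun w => c * f w) z = c * wirtingerDzbar f z := by
  simp only [wirtingerDzbar, ← smul_eq_mul (a := c), ← Pi.smul_def, fderiv_const_smul_field,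
    Pi.smul_apply, smul_apply]
  ring

theorem wirtingerDz_add {g : ℂ → ℂ} (hf : DifferentiableAt ℝ f z) (hg : DifferentiableAt ℝ g z) :
    wirtingerDz (fun w => f w + g w) z = wirtingerDz f z + wirtingerDz g z := by
  simp only [wirtingerDz, fderiv_fun_add hf hg, add_apply]
  ring

theorem wirtingerDzbar_add {g : ℂ → ℂ} (hf : DifferentiableAt ℝ f z)
    (hg : DifferentiableAt ℝ g z) :
    wirtingerDzbar (fun w => f w + g w) z = wirtingerDzbar f z + wirtingerDzbar g z := by
  simp only [wirtingerDzbar, fderiv_fun_add hf hg, add_apply]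
  ring

end Wirtinger

section Separable

variable (f g : ℂ → ℂ)

theorem D1_mul : D1 (fun z₁ z₂ => f z₁ * g z₂) = fun z₁ z₂ => wirtingerDz f z₁ * g z₂ := by
  ext z₁ z₂
  simp only [D1, mul_comm _ (g z₂), wirtingerDz_const_mul]

theorem D1bar_mul :
    D1bar (fun z₁ z₂ => f z₁ * g z₂) = fun z₁ z₂ => wirtingerDzbar f z₁ * g z₂ := by
  ext z₁ z₂
  simp only [D1bar, mul_comm _ (g z₂), wirtingerDzbar_const_mul]

theorem D2bar_mul :
    D2bar (fun z₁ z₂ => f z₁ * g z₂) = fun z₁ z₂ => f z₁ * wirtingerDzbar g z₂ := by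
  ext z₁ z₂
  simp only [D2bar, wirtingerDzbar_const_mul]

theorem Xprime_mul (z₁ z₂ : ℂ) :
    Xprime (fun z₁ z₂ => f z₁ * g z₂) z₁ z₂ =
      z₂ ^ 2 * wirtingerDz (wirtingerDzbar f) z₁ * g z₂ +
      conj z₁ * z₂ * wirtingerDzbar f z₁ * wirtingerDzbar g z₂ +
      z₁ * z₂ * wirtingerDz f z₁ * wirtingerDzbar g z₂ +
      z₁ * conj z₁ * f z₁ * wirtingerDzbar (wirtingerDzbar g) z₂ +
      z₂ * f z₁ * wirtingerDzbar g z₂ := by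
  simp only [Xprime, D1_mul, D1bar_mul, D2bar_mul]
  ring

end Separable

noncomputable def gaussianMonomial (α : ℂ) (n k : ℕ) (z : ℂ) : ℂ :=
  z ^ n * conj z ^ k * exp (α * (z * conj z))

section GaussianMonomial

variable (α : ℂ) (n k : ℕ)

theorem hasFDerivAt_gaussianMonomial (z : ℂ) :
    HasFDerivAt (gaussianMonomial α n k)
      ((n * gaussianMonomial α (n - 1) k z + α * gaussianMonomial α n (k + 1) z) •
          ContinuousLinearMap.id ℝ ℂ +
        (k * gaussianMonomial α n (k - 1) z + α * gaussianMonomial α (n + 1) k z) •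
          conjCLE.toContinuousLinearMap) z := by
  have hconj : HasFDerivAt conj conjCLE.toContinuousLinearMap z :=
    conjCLE.toContinuousLinearMap.hasFDerivAt
  have hpow := (hasDerivAt_pow n z).hasFDerivAt.restrictScalars ℝ
  have hconjpow := ((hasDerivAt_pow k (conj z)).hasFDerivAt.restrictScalars ℝ).comp z hconj
  have hexp := (((hasFDerivAt_id z).mul hconj).const_mul α).cexp
  refine ((hpow.mul hconjpow).mul hexp).congr_fderiv ?_
  ext v
  simp only [gaussianMonomial, pow_succ, id_eq, add_apply, smul_apply, smul_eq_mul, Pi.mul_apply,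
    Function.comp_apply, ContinuousLinearMap.id_apply, ContinuousLinearMap.comp_apply,
    ContinuousLinearMap.coe_restrictScalars', ContinuousLinearMap.toSpanSingleton_apply,
    ContinuousLinearEquiv.coe_coe, conjCLE_apply]
  ring

@[fun_prop]
theorem differentiable_gaussianMonomial : Differentiable ℝ (gaussianMonomial α n k) :=
  fun z => (hasFDerivAt_gaussianMonomial α n k z).differentiableAt

theorem wirtingerDz_gaussianMonomial :
    wirtingerDz (gaussianMonomial α n k) =
      fun z => n * gaussianMonomial α (n - 1) k z + α * gaussianMonomial α n (k + 1) z :=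
  funext fun z => wirtingerDz_eq_of_hasFDerivAt (hasFDerivAt_gaussianMonomial α n k z)

theorem wirtingerDzbar_gaussianMonomial :
    wirtingerDzbar (gaussianMonomial α n k) =
      fun z => k * gaussianMonomial α n (k - 1) z + α * gaussianMonomial α (n + 1) k z :=
  funext fun z => wirtingerDzbar_eq_of_hasFDerivAt (hasFDerivAt_gaussianMonomial α n k z)

end GaussianMonomial

theorem phiLM_eq_mul (l m : ℕ) :
    phiLM l m = fun z₁ z₂ =>
      gaussianMonomial (-(2 * Real.pi)) l l z₁ *
        gaussianMonomial (-(2 * Real.pi)) (2 * m) 0 z₂ := by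
  ext z₁ z₂
  simp only [phiLM, gaussianMonomial, mul_pow, pow_zero, mul_one, mul_add, exp_add]
  ring

/-- `X'φ^{(l,m)} = l²·φ^{(l-1,m+1)} - 4π(2l+1)·φ^{(l,m+1)} +
(4π)²·φ^{(l+1,m+1)}` (for `l = 0` the first term has coefficient `l² = 0`). -/
theorem Xprime_phiLM (l m : ℕ) (z₁ z₂ : ℂ) :
    Xprime (phiLM l m) z₁ z₂ =
      (l : ℂ) ^ 2 * phiLM (l - 1) (m + 1) z₁ z₂ -
        4 * (Real.pi : ℂ) * (2 * l + 1) * phiLM l (m + 1) z₁ z₂ +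
        (4 * (Real.pi : ℂ)) ^ 2 * phiLM (l + 1) (m + 1) z₁ z₂ := by
  rw [phiLM_eq_mul, Xprime_mul]
  simp (disch := fun_prop) only [wirtingerDzbar_gaussianMonomial, wirtingerDz_gaussianMonomial,
    wirtingerDz_add, wirtingerDzbar_add, wirtingerDzbar_const_mul, wirtingerDz_const_mul]
  -- `l - 1` truncates at `l = 0`, where its coefficient `l` vanishes.
  rcases l with _ | l <;>
  · simp only [phiLM_eq_mul, gaussianMonomial, add_tsub_cancel_right]
    push_cast
    ring
end
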